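/- arXiv:1907.08646 — 3 statements merged into one kernel-verified Lean document; each statement's English description precedes it below -/
import Mathlib

section
/- Let n > 0, let X ∈ ℝ^{n×p} be a design matrix whose first column is the all-ones vector, let Y ∈ ℝⁿ, and let β̂ ∈ ℝᵖ and b ∈ [0,1]ⁿ satisfy the dual feasibility condition Xᵀb = (1−τ)·Xᵀ𝟙 together with the complementary slackness conditions b_i = 1 whenever Y_i > X_iᵀβ̂ and b_i = 0 whenever Y_i < X_iᵀβ̂. Then the number of indices i with Y_i > X_iᵀβ̂ satisfies |#{i : Y_i > X_iᵀβ̂} − (1−τ)·n| ≤ #{i : Y_i = X_iᵀβ̂}. -/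
open Finset

/-- Primal-dual quantile regression: with an intercept column, dual feasibility
`Xᵀb = (1−τ)Xᵀ𝟙` with `b ∈ [0,1]ⁿ`, and complementary slackness, the exceedance
count satisfies `|#{i : Y_i > X_iᵀβ̂} − (1−τ)n| ≤ #{i : Y_i = X_iᵀβ̂}`. -/
theorem quantile_regression_exceedance_count
    (n p : ℕ) (hn : 0 < n)
    (X : Fin n → Fin p → ℝ) (Y : Fin n → ℝ) (β : Fin p → ℝ)
    (τ : ℝ) (hτ : τ ∈ Set.Ioo (0:ℝ) 1)
    (j₀ : Fin p) (hones : ∀ i, X i j₀ = 1)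
    (b : Fin n → ℝ) (hb : ∀ i, b i ∈ Set.Icc (0:ℝ) 1)
    (hdual : ∀ j : Fin p, ∑ i, X i j * b i = (1 - τ) * ∑ i, X i j)
    (hcs1 : ∀ i, (∑ j, X i j * β j) < Y i → b i = 1)
    (hcs0 : ∀ i, Y i < (∑ j, X i j * β j) → b i = 0) :
    |((univ.filter fun i => (∑ j, X i j * β j) < Y i).card : ℝ) - (1 - τ) * n|
      ≤ ((univ.filter fun i => Y i = ∑ j, X i j * β j).card : ℝ) := by
  have hsum : ∑ i, b i = (1 - τ) * n := by
    have h := hdual j₀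
    simp only [hones, one_mul] at h
    simpa using h
  set fit : Fin n → ℝ := fun i => ∑ j, X i j * β j with hfit
  have hlow : ((univ.filter fun i => fit i < Y i).card : ℝ) ≤ ∑ i, b i := by
    calc ((univ.filter fun i => fit i < Y i).card : ℝ)
        = ∑ i, (if fit i < Y i then (1:ℝ) else 0) := by
          rw [Finset.sum_boole]
      _ ≤ ∑ i, b i := by
          apply Finset.sum_le_sum
          intro i _
          by_cases h : fit i < Y i
          · simp [h, (hcs1 i h).ge]
          · simp [h, (hb i).1]
  have hhigh : ∑ i, b i ≤ ((univ.filter fun i => fit i < Y i).card : ℝ)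
      + ((univ.filter fun i => Y i = fit i).card : ℝ) := by
    have h1 : ∑ i, b i ≤ ∑ i, (if fit i < Y i ∨ Y i = fit i then (1:ℝ) else 0) := by
      apply Finset.sum_le_sum
      intro i _
      by_cases h : fit i < Y i ∨ Y i = fit i
      · simp [h, (hb i).2]
      · have h' := h
        push_neg at h'
        have hlt : Y i < fit i := lt_of_le_of_ne h'.1 h'.2
        simp [h, hcs0 i hlt, le_refl]
    have h2 : ∑ i, (if fit i < Y i ∨ Y i = fit i then (1:ℝ) else 0)
        = ((univ.filter fun i => fit i < Y i ∨ Y i = fit i).card : ℝ) := by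
      rw [Finset.sum_boole]
    have h3 : (univ.filter fun i => fit i < Y i ∨ Y i = fit i)
        = (univ.filter fun i => fit i < Y i) ∪ (univ.filter fun i => Y i = fit i) := by
      rw [Finset.filter_or]
    have hdisj : Disjoint (univ.filter fun i => fit i < Y i)
        (univ.filter fun i => Y i = fit i) := by
      rw [Finset.disjoint_filter]
      intro i _ h1 h2
      exact h1.ne' h2
    calc ∑ i, b i ≤ ((univ.filter fun i => fit i < Y i ∨ Y i = fit i).card : ℝ) := by
          rw [← h2]; exact h1
      _ = _ := by rw [h3, Finset.card_union_of_disjoint hdisj]; push_cast; ring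
  rw [← hsum, abs_le]
  constructor <;> linarith
end

section
/- Under the same setting, suppose additionally that the j-th column of X is binary, i.e. X_{ij} ∈ {0,1} for all i. Then for each value a ∈ {0,1}, writing n_a = #{i : X_{ij} = a}, the count of exceedances within the subpopulation X_{ij} = a satisfies |#{i : X_{ij} = a, Y_i > X_iᵀβ̂} − (1−τ)·n_a| ≤ #{i : Y_i = X_iᵀβ̂}. Consequently, if at most p residuals are exactly zero, the empirical effective quantiles of both subpopulations differ from τ by at most p/min(n_0, n_1). -/
/-!
Dual feasibility for the intercept column and for the binary column `x` says that `b` sums to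
`(1 - τ)` times the size of each of the subpopulations `x = 1` and `x = 0`, the indicator of the
latter being `1 - x`. By complementary slackness `b` is the exceedance indicator off the zero
residuals, and on them it lies in `[0, 1]`; so within each subpopulation the number of
exceedances differs from `(1 - τ) n_a` by at most the number of zero residuals.
-/

open Finset

section BinaryCovariate

variable {ι : Type*} [Fintype ι] {x : ι → ℝ}

lemma sum_filter_eq_one_eq_sum_mul (hx : ∀ i, x i = 0 ∨ x i = 1) (f : ι → ℝ) :
    ∑ i ∈ univ.filter (fun i => x i = 1), f i = ∑ i, x i * f i := by
  rw [sum_filter]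
  refine sum_congr rfl fun i _ => ?_
  rcases hx i with h | h <;> simp [h]

lemma sum_filter_eq_zero_eq_sum_sub_sum_mul (hx : ∀ i, x i = 0 ∨ x i = 1) (f : ι → ℝ) :
    ∑ i ∈ univ.filter (fun i => x i = 0), f i = ∑ i, f i - ∑ i, x i * f i := by
  rw [sum_filter, ← sum_sub_distrib]
  refine sum_congr rfl fun i _ => ?_
  rcases hx i with h | h <;> simp [h]

lemma sum_filter_eq_mul_card_of_binary (hx : ∀ i, x i = 0 ∨ x i = 1) {b : ι → ℝ} {c : ℝ}
    (hone : ∑ i, b i = c * Fintype.card ι) (hcol : ∑ i, x i * b i = c * ∑ i, x i)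
    {a : ℝ} (ha : a = 0 ∨ a = 1) :
    ∑ i ∈ univ.filter (fun i => x i = a), b i = c * #(univ.filter fun i => x i = a) := by
  have hcard : (#(univ.filter fun i => x i = a) : ℝ)
      = ∑ i ∈ univ.filter (fun i => x i = a), 1 := by
    simp
  rcases ha with rfl | rfl
  · rw [hcard, sum_filter_eq_zero_eq_sum_sub_sum_mul hx, sum_filter_eq_zero_eq_sum_sub_sum_mul hx]
    simp only [mul_one, sum_const, card_univ, nsmul_eq_mul, hone, hcol]
    ring
  · rw [hcard, sum_filter_eq_one_eq_sum_mul hx, sum_filter_eq_one_eq_sum_mul hx]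
    simpa using hcol

end BinaryCovariate

section ComplementarySlackness

variable {ι : Type*} {Y q b : ι → ℝ}

lemma sum_eq_card_filter_lt_add_sum_filter_eq
    (hcs : ∀ i, Y i ≠ q i → b i = if q i < Y i then 1 else 0) (s : Finset ι) :
    ∑ i ∈ s, b i
      = #(s.filter fun i => q i < Y i) + ∑ i ∈ s.filter (fun i => Y i = q i), b i := by
  have hsplit (i : ι) : b i = (if q i < Y i then 1 else 0) + if Y i = q i then b i else 0 := by
    rcases lt_trichotomy (q i) (Y i) with h | h | h
    · simp [hcs i h.ne', h, h.ne']
    · simp [h]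
    · simp [hcs i h.ne, h.not_gt, h.ne]
  rw [sum_congr rfl fun i _ => hsplit i, sum_add_distrib, sum_boole, sum_filter]

lemma abs_card_filter_lt_sub_sum_le (hb : ∀ i, b i ∈ Set.Icc (0 : ℝ) 1)
    (hcs : ∀ i, Y i ≠ q i → b i = if q i < Y i then 1 else 0) (s : Finset ι) :
    |(#(s.filter fun i => q i < Y i) : ℝ) - ∑ i ∈ s, b i|
      ≤ #(s.filter fun i => Y i = q i) := by
  rw [sum_eq_card_filter_lt_add_sum_filter_eq hcs, sub_add_cancel_left, abs_neg,
    abs_of_nonneg (sum_nonneg fun i _ => (hb i).1)]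
  exact (sum_le_sum fun i _ => (hb i).2).trans (by simp)

lemma abs_card_filter_le_div_card_sub_le {s : Finset ι} (hs : 0 < #s) {τ Z : ℝ}
    (h : |(#(s.filter fun i => q i < Y i) : ℝ) - (1 - τ) * #s| ≤ Z) :
    |(#(s.filter fun i => Y i ≤ q i) : ℝ) / #s - τ| ≤ Z / #s := by
  have hs' : (0 : ℝ) < #s := by exact_mod_cast hs
  have hcompl : (#(s.filter fun i => Y i ≤ q i) : ℝ) = #s - #(s.filter fun i => q i < Y i) := by
    rw [eq_sub_iff_add_eq, ← card_filter_add_card_filter_not (s := s) (fun i => Y i ≤ q i)]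
    simp only [not_le, Nat.cast_add]
  have hquot : (#(s.filter fun i => Y i ≤ q i) : ℝ) / #s - τ
      = -((#(s.filter fun i => q i < Y i) : ℝ) - (1 - τ) * #s) / #s := by
    rw [hcompl]
    field_simp
    ring
  rw [hquot, abs_div, abs_neg, abs_of_pos hs']
  exact div_le_div_of_nonneg_right h hs'.le

end ComplementarySlackness

theorem quantile_regression_balanced_effective_quantiles_general
    (n p : ℕ)
    (X : Fin n → Fin p → ℝ) (Y : Fin n → ℝ) (β : Fin p → ℝ)
    (τ : ℝ)
    (j₀ : Fin p) (hones : ∀ i, X i j₀ = 1)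
    (j : Fin p) (hbin : ∀ i, X i j = 0 ∨ X i j = 1)
    (b : Fin n → ℝ) (hb : ∀ i, b i ∈ Set.Icc (0:ℝ) 1)
    (hdual : ∀ k : Fin p, ∑ i, X i k * b i = (1 - τ) * ∑ i, X i k)
    (hcs : ∀ i, Y i ≠ (∑ k, X i k * β k) →
        b i = if (∑ k, X i k * β k) < Y i then 1 else 0) :
    (∀ a : ℝ, a = 0 ∨ a = 1 →
      |((univ.filter fun i => X i j = a ∧ (∑ k, X i k * β k) < Y i).card : ℝ)
          - (1 - τ) * ((univ.filter fun i => X i j = a).card : ℝ)|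
        ≤ ((univ.filter fun i => Y i = ∑ k, X i k * β k).card : ℝ))
    ∧ (((univ.filter fun i => Y i = ∑ k, X i k * β k).card : ℝ) ≤ p →
        ∀ a : ℝ, a = 0 ∨ a = 1 →
        0 < (univ.filter fun i => X i j = (0:ℝ)).card →
        0 < (univ.filter fun i => X i j = (1:ℝ)).card →
        |((univ.filter fun i => X i j = a ∧ Y i ≤ ∑ k, X i k * β k).card : ℝ)
            / ((univ.filter fun i => X i j = a).card : ℝ) - τ|
          ≤ (p : ℝ) / min ((univ.filter fun i => X i j = (0:ℝ)).card : ℝ)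
              ((univ.filter fun i => X i j = (1:ℝ)).card : ℝ)) := by
  have hdev (a : ℝ) (ha : a = 0 ∨ a = 1) :
      |((univ.filter fun i => X i j = a).filter (fun i => (∑ k, X i k * β k) < Y i)).card
          - (1 - τ) * ((univ.filter fun i => X i j = a).card : ℝ)|
        ≤ ((univ.filter fun i => Y i = ∑ k, X i k * β k).card : ℝ) := by
    rw [← sum_filter_eq_mul_card_of_binary hbin (by simpa [hones] using hdual j₀) (hdual j) ha]
    refine (abs_card_filter_lt_sub_sum_le hb hcs _).trans ?_
    exact_mod_cast card_le_card (filter_subset_filter _ (subset_univ _))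
  refine ⟨fun a ha => by simpa only [filter_filter] using hdev a ha, ?_⟩
  intro hzero a ha h0 h1
  have hpos : 0 < (univ.filter fun i => X i j = a).card := by
    rcases ha with rfl | rfl <;> assumption
  have hmin : min ((univ.filter fun i => X i j = (0:ℝ)).card : ℝ)
      ((univ.filter fun i => X i j = (1:ℝ)).card : ℝ)
        ≤ (univ.filter fun i => X i j = a).card := by
    rcases ha with rfl | rfl
    exacts [min_le_left _ _, min_le_right _ _]
  rw [← filter_filter]
  refine (abs_card_filter_le_div_card_sub_le hpos (hdev a ha)).trans ?_
  exact div_le_div₀ p.cast_nonneg hzero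
    (lt_min (by exact_mod_cast h0) (by exact_mod_cast h1)) hmin

/-- Balanced empirical effective quantiles for a binary covariate in quantile regression:
within each subpopulation `X_{ij} = a` (`a ∈ {0,1}`), the count of exceedances deviates
from `(1−τ)·n_a` by at most the number of zero residuals; consequently if at most `p`
residuals are exactly zero, the empirical effective quantiles of both subpopulations
differ from `τ` by at most `p / min(n₀, n₁)`. -/
theorem quantile_regression_balanced_effective_quantiles
    (n p : ℕ) (hn : 0 < n)
    (X : Fin n → Fin p → ℝ) (Y : Fin n → ℝ) (β : Fin p → ℝ)
    (τ : ℝ) (hτ : τ ∈ Set.Ioo (0:ℝ) 1)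
    (j₀ : Fin p) (hones : ∀ i, X i j₀ = 1)
    (j : Fin p) (hbin : ∀ i, X i j = 0 ∨ X i j = 1)
    (b : Fin n → ℝ) (hb : ∀ i, b i ∈ Set.Icc (0:ℝ) 1)
    (hdual : ∀ k : Fin p, ∑ i, X i k * b i = (1 - τ) * ∑ i, X i k)
    (hcs : ∀ i, Y i ≠ (∑ k, X i k * β k) →
        b i = if (∑ k, X i k * β k) < Y i then 1 else 0) :
    (∀ a : ℝ, a = 0 ∨ a = 1 →
      |((univ.filter fun i => X i j = a ∧ (∑ k, X i k * β k) < Y i).card : ℝ)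
          - (1 - τ) * ((univ.filter fun i => X i j = a).card : ℝ)|
        ≤ ((univ.filter fun i => Y i = ∑ k, X i k * β k).card : ℝ))
    ∧ (((univ.filter fun i => Y i = ∑ k, X i k * β k).card : ℝ) ≤ p →
        ∀ a : ℝ, a = 0 ∨ a = 1 →
        0 < (univ.filter fun i => X i j = (0:ℝ)).card →
        0 < (univ.filter fun i => X i j = (1:ℝ)).card →
        |((univ.filter fun i => X i j = a ∧ Y i ≤ ∑ k, X i k * β k).card : ℝ)
            / ((univ.filter fun i => X i j = a).card : ℝ) - τ|
          ≤ (p : ℝ) / min ((univ.filter fun i => X i j = (0:ℝ)).card : ℝ)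
              ((univ.filter fun i => X i j = (1:ℝ)).card : ℝ)) :=
  quantile_regression_balanced_effective_quantiles_general n p X Y β τ j₀ hones j hbin b hb hdual
    hcs
end

section
/- Fix n, let R, A ∈ ℝⁿ, μ, ν ∈ ℝ, and let b ∈ [0,1]ⁿ be regression rank scores satisfying Aᵀb = (1−τ)Aᵀ𝟙, 𝟙ᵀb = (1−τ)n, and b_i = 1{R_i > μA_i + ν} for all i outside a set M ⊆ {1,…,n} with |M| ≤ p. Then for any constant c ∈ ℝ, |(1/n)Σᵢ (Aᵢ − c)·1{Rᵢ > μAᵢ + ν}| ≤ |(1/n)Σᵢ (Aᵢ − c)| · (1−τ) + (p/n)·maxᵢ |Aᵢ − c|. -/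
/-!
The two moment constraints on `b` say exactly that
`∑ (Aᵢ - c) bᵢ = (1 - τ) ∑ (Aᵢ - c)` for every `c`. Replacing the indicators
`1{Rᵢ > μAᵢ + ν}` by `bᵢ` therefore produces the first term of the bound, and the
error only comes from the at most `p` indices in `M`, where `|1{·} - bᵢ| ≤ 1` since
both lie in `[0, 1]`.
-/

open Finset

variable {ι : Type*}

theorem sum_sub_const_mul_eq_of_moments (s : Finset ι) {A b : ι → ℝ} {t c : ℝ}
    (hA : ∑ i ∈ s, A i * b i = t * ∑ i ∈ s, A i) (h1 : ∑ i ∈ s, b i = t * s.card) :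
    ∑ i ∈ s, (A i - c) * b i = t * ∑ i ∈ s, (A i - c) := by
  simp only [sub_mul, sum_sub_distrib, hA, ← mul_sum, h1, sum_const, nsmul_eq_mul]
  ring

theorem abs_sum_mul_le_card_mul (s : Finset ι) {f g : ι → ℝ} {S : ℝ}
    (hf : ∀ i ∈ s, |f i| ≤ S) (hg : ∀ i ∈ s, |g i| ≤ 1) :
    |∑ i ∈ s, f i * g i| ≤ s.card * S := by
  calc |∑ i ∈ s, f i * g i|
      ≤ ∑ i ∈ s, |f i * g i| := abs_sum_le_sum_abs _ _
    _ ≤ s.card • S := sum_le_card_nsmul _ _ _ fun i hi => by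
        rw [abs_mul]
        exact (mul_le_of_le_one_right (abs_nonneg _) (hg i hi)).trans (hf i hi)
    _ = s.card * S := nsmul_eq_mul _ _

theorem abs_sum_mul_le_of_eq_off [Fintype ι] (M : Finset ι) {f b e : ι → ℝ} {t S : ℝ}
    (ht : 0 ≤ t) (hb : ∑ i, f i * b i = t * ∑ i, f i)
    (hf : ∀ i, |f i| ≤ S) (heb : ∀ i, |e i - b i| ≤ 1) (hM : ∀ i ∉ M, b i = e i) :
    |∑ i, f i * e i| ≤ t * |∑ i, f i| + M.card * S := by
  have hsplit : ∑ i, f i * e i = t * ∑ i, f i + ∑ i ∈ M, f i * (e i - b i) := by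
    have hoff : ∑ i ∈ M, f i * (e i - b i) = ∑ i, f i * (e i - b i) :=
      sum_subset (subset_univ M) fun i _ hi => by rw [hM i hi, sub_self, mul_zero]
    rw [hoff, ← hb, ← sum_add_distrib]
    exact sum_congr rfl fun i _ => by ring
  calc |∑ i, f i * e i|
      ≤ |t * ∑ i, f i| + |∑ i ∈ M, f i * (e i - b i)| := hsplit ▸ abs_add_le _ _
    _ ≤ t * |∑ i, f i| + M.card * S := by
        rw [abs_mul, abs_of_nonneg ht]
        gcongr
        exact abs_sum_mul_le_card_mul M (fun i _ => hf i) (fun i _ => heb i)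

/-- Rank-score bound: if `b ∈ [0,1]ⁿ` satisfies `Aᵀb = (1−τ)Aᵀ𝟙`, `𝟙ᵀb = (1−τ)n`, and
`bᵢ = 1{Rᵢ > μAᵢ + ν}` outside a set `M` with `|M| ≤ p`, then for any `c ∈ ℝ`,
`|(1/n)Σᵢ(Aᵢ−c)1{Rᵢ > μAᵢ+ν}| ≤ |(1/n)Σᵢ(Aᵢ−c)|·(1−τ) + (p/n)·maxᵢ|Aᵢ−c|`. -/
theorem rank_score_covariance_bound
    (n p : ℕ) (hn : 0 < n)
    (R A : Fin n → ℝ) (μ ν τ c : ℝ) (hτ : τ ∈ Set.Ioo (0:ℝ) 1)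
    (b : Fin n → ℝ) (hb : ∀ i, b i ∈ Set.Icc (0:ℝ) 1)
    (M : Finset (Fin n)) (hM : M.card ≤ p)
    (hbM : ∀ i ∉ M, b i = if μ * A i + ν < R i then 1 else 0)
    (hA : ∑ i, A i * b i = (1 - τ) * ∑ i, A i)
    (h1 : ∑ i, b i = (1 - τ) * n) :
    |(1 / (n : ℝ)) * ∑ i, (A i - c) * (if μ * A i + ν < R i then 1 else 0)|
      ≤ |(1 / (n : ℝ)) * ∑ i, (A i - c)| * (1 - τ)
        + ((p : ℝ) / n) * (univ.sup' ⟨⟨0, hn⟩, mem_univ _⟩ fun i => |A i - c|) := by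
  set S := univ.sup' ⟨⟨0, hn⟩, mem_univ _⟩ fun i => |A i - c|
  have hAS : ∀ i, |A i - c| ≤ S := fun i => le_sup' (fun i => |A i - c|) (mem_univ i)
  have hS : 0 ≤ S := (abs_nonneg _).trans (hAS ⟨0, hn⟩)
  have hmoment : ∑ i, (A i - c) * b i = (1 - τ) * ∑ i, (A i - c) :=
    sum_sub_const_mul_eq_of_moments univ hA (by rwa [card_univ, Fintype.card_fin])
  have hind : ∀ i, |(if μ * A i + ν < R i then 1 else 0) - b i| ≤ 1 := fun i =>
    abs_sub_le_of_nonneg_of_le (by split_ifs <;> norm_num) (by split_ifs <;> norm_num)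
      (hb i).1 (hb i).2
  have hbound := abs_sum_mul_le_of_eq_off M (sub_nonneg.2 hτ.2.le) hmoment hAS hind hbM
  have hMp : (M.card : ℝ) ≤ p := by exact_mod_cast hM
  rw [abs_mul, abs_mul, abs_of_pos (by positivity : (0 : ℝ) < 1 / n)]
  calc 1 / (n : ℝ) * |∑ i, (A i - c) * (if μ * A i + ν < R i then 1 else 0)|
      ≤ 1 / n * ((1 - τ) * |∑ i, (A i - c)| + p * S) := by
        gcongr
        linarith [mul_le_mul_of_nonneg_right hMp hS]
    _ = 1 / n * |∑ i, (A i - c)| * (1 - τ) + p / n * S := by ring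
end
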